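/- arXiv:2412.04944 — 3 statements merged into one kernel-verified Lean document; each statement's English description precedes it below -/
import Mathlib

section
/- Let L be an atomistic complete lattice with length at least 2 and T a t-norm on C(L) = A(L) ∪ {0,1}. Define κ(x) = {u ∈ C(L) \ {0} | u ≤ x} and T̄(x,y) = ⋁_{u ∈ κ(x)} ⋁_{v ∈ κ(y)} T(u,v). Then T̄ is a t-norm on L. -/
def IsTnorm {L : Type*} [PartialOrder L] [BoundedOrder L] (T : L → L → L) : Prop :=
  (∀ x : L, Monotone (T x)) ∧ (∀ x y : L, T x y = T y x) ∧
  (∀ x y z : L, T x (T y z) = T (T x y) z) ∧ (∀ x : L, T x ⊤ = x)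

open Classical in
noncomputable def TD {L : Type*} [Lattice L] [BoundedOrder L] (x y : L) : L :=
  if x = ⊤ ∨ y = ⊤ then x ⊓ y else ⊥

def CL (L : Type*) [CompleteLattice L] : Set L := {x | IsAtom x ∨ x = ⊥ ∨ x = ⊤}

def kappa {L : Type*} [CompleteLattice L] (x : L) : Set L :=
  {u | u ∈ CL L ∧ u ≠ ⊥ ∧ u ≤ x}

noncomputable def Tbar {L : Type*} [CompleteLattice L] (T : L → L → L) (x y : L) : L :=
  ⨆ u ∈ kappa x, ⨆ v ∈ kappa y, T u v

def IsTnormOn {L : Type*} [PartialOrder L] [OrderTop L] (C : Set L) (T : L → L → L) : Prop :=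
  (∀ x ∈ C, ∀ y ∈ C, T x y ∈ C) ∧
  (∀ x ∈ C, ∀ y ∈ C, ∀ z ∈ C, y ≤ z → T x y ≤ T x z) ∧
  (∀ x ∈ C, ∀ y ∈ C, T x y = T y x) ∧
  (∀ x ∈ C, ∀ y ∈ C, ∀ z ∈ C, T x (T y z) = T (T x y) z) ∧
  (∀ x ∈ C, T x ⊤ = x)

open Classical in
noncomputable def Talpha {L : Type*} [CompleteLattice L] (α : Set L) (x y : L) : L :=
  if x = ⊤ ∨ y = ⊤ then x ⊓ y else if x = y ∧ x ∈ α then x else ⊥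

/-!
Since `T u v ≤ u ⊓ v` on `C(L)`, the product of two atoms is `⊥` unless they coincide and are
idempotent. This is what lets `T̄(x, T̄(y, z))` be computed pointwise: it equals the triple supremum
of `T(u, T(v, t))` over `u ∈ κ(x)`, `v ∈ κ(y)`, `t ∈ κ(z)`, which associativity and commutativity
of `T` on `C(L)` make invariant under rotating `x, y, z`. Atomisticity gives `T̄(x, 1) = x`.
-/

lemma top_mem_CL {L : Type*} [CompleteLattice L] : (⊤ : L) ∈ CL L := .inr (.inr rfl)

namespace IsTnormOn

section PartialOrder

variable {L : Type*} [PartialOrder L] [OrderTop L] {C : Set L} {T : L → L → L}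
  (hT : IsTnormOn C T) (htop : ⊤ ∈ C) {x y : L}
include hT htop

lemma top_apply (hx : x ∈ C) : T ⊤ x = x := by
  rw [hT.2.2.1 ⊤ htop x hx, hT.2.2.2.2 x hx]

lemma le_left (hx : x ∈ C) (hy : y ∈ C) : T x y ≤ x := by
  simpa only [hT.2.2.2.2 x hx] using hT.2.1 x hx y hy ⊤ htop le_top

lemma le_right (hx : x ∈ C) (hy : y ∈ C) : T x y ≤ y := by
  rw [hT.2.2.1 x hx y hy]
  exact hT.le_left htop hy hx

end PartialOrder

section CompleteLattice

variable {L : Type*} [CompleteLattice L] {T : L → L → L} (hT : IsTnormOn (CL L) T) {a b u : L}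
include hT

lemma apply_bot (hu : u ∈ CL L) : T u ⊥ = ⊥ :=
  le_bot_iff.mp (hT.le_right top_mem_CL hu (.inr (.inl rfl)))

lemma eq_of_isAtom_of_ne_bot (ha : IsAtom a) (hb : IsAtom b) (h : T a b ≠ ⊥) :
    a = b ∧ T a b = a := by
  have hTa : T a b = a := (ha.le_iff.mp (hT.le_left top_mem_CL (.inl ha) (.inl hb))).resolve_left h
  have hTb : T a b = b := (hb.le_iff.mp (hT.le_right top_mem_CL (.inl ha) (.inl hb))).resolve_left h
  exact ⟨hTa.symm.trans hTb, hTa⟩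

end CompleteLattice

end IsTnormOn

section Tbar

variable {L : Type*} [CompleteLattice L] {T : L → L → L} {x y z u v s t : L}

lemma kappa_mono : Monotone (kappa : L → Set L) :=
  fun _ _ hxy _ hu => ⟨hu.1, hu.2.1, hu.2.2.trans hxy⟩

lemma le_Tbar (hu : u ∈ kappa x) (hv : v ∈ kappa y) : T u v ≤ Tbar T x y :=
  le_iSup₂_of_le u hu (le_iSup₂_of_le v hv le_rfl)

lemma Tbar_le {c : L} (h : ∀ u ∈ kappa x, ∀ v ∈ kappa y, T u v ≤ c) : Tbar T x y ≤ c :=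
  iSup₂_le fun u hu => iSup₂_le fun v hv => h u hu v hv

lemma Tbar_mono_right : Monotone (Tbar T x) :=
  fun _ _ hyz => Tbar_le fun _ hu _ hv => le_Tbar hu (kappa_mono hyz hv)

noncomputable def Tbar₃ (T : L → L → L) (x y z : L) : L :=
  ⨆ u ∈ kappa x, ⨆ v ∈ kappa y, ⨆ t ∈ kappa z, T u (T v t)

lemma le_Tbar₃ (hu : u ∈ kappa x) (hv : v ∈ kappa y) (ht : t ∈ kappa z) :
    T u (T v t) ≤ Tbar₃ T x y z :=
  le_iSup₂_of_le u hu (le_iSup₂_of_le v hv (le_iSup₂_of_le t ht le_rfl))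

variable (hT : IsTnormOn (CL L) T)
include hT

lemma Tbar_comm (x y : L) : Tbar T x y = Tbar T y x := by
  have hle : ∀ x y : L, Tbar T x y ≤ Tbar T y x := fun _ _ =>
    Tbar_le fun u hu v hv => hT.2.2.1 u hu.1 v hv.1 ▸ le_Tbar hv hu
  exact le_antisymm (hle x y) (hle y x)

lemma Tbar_le_inf (x y : L) : Tbar T x y ≤ x ⊓ y :=
  Tbar_le fun _ hu _ hv => le_inf
    ((hT.le_left top_mem_CL hu.1 hv.1).trans hu.2.2)
    ((hT.le_right top_mem_CL hu.1 hv.1).trans hv.2.2)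

lemma Tbar_top [IsAtomistic L] (x : L) : Tbar T x ⊤ = x := by
  refine le_antisymm ((Tbar_le_inf hT x ⊤).trans inf_le_left) ?_
  conv_lhs => rw [← sSup_atoms_le_eq x]
  refine sSup_le fun a ⟨ha, hax⟩ => ?_
  have htop : (⊤ : L) ∈ kappa ⊤ := ⟨top_mem_CL, ne_bot_of_le_ne_bot ha.1 le_top, le_rfl⟩
  calc a = T a ⊤ := (hT.2.2.2.2 a (.inl ha)).symm
    _ ≤ Tbar T x ⊤ := le_Tbar ⟨.inl ha, ha.1, hax⟩ htop

lemma apply_le_Tbar₃ (hu : u ∈ kappa x) (hs : s ∈ kappa (Tbar T y z)) :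
    T u s ≤ Tbar₃ T x y z := by
  have hs_yz : s ≤ y ⊓ z := hs.2.2.trans (Tbar_le_inf hT y z)
  obtain ⟨hs_atom | hs_bot | rfl, hs_ne, hs_le⟩ := hs
  · rcases hu.1 with hu_atom | hu_bot | rfl
    · by_cases h : T u s = ⊥
      · exact h ▸ bot_le
      obtain ⟨rfl, huu⟩ := hT.eq_of_isAtom_of_ne_bot hu_atom hs_atom h
      have hy : u ∈ kappa y := ⟨.inl hs_atom, hs_ne, hs_yz.trans inf_le_left⟩
      have hz : u ∈ kappa z := ⟨.inl hs_atom, hs_ne, hs_yz.trans inf_le_right⟩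
      calc T u u = T u (T u u) := by rw [huu, huu]
        _ ≤ Tbar₃ T x y z := le_Tbar₃ hu hy hz
    · exact absurd hu_bot hu.2.1
    · rw [hT.top_apply top_mem_CL (.inl hs_atom)]
      refine hs_le.trans (Tbar_le fun v hv t ht => ?_)
      calc T v t = T ⊤ (T v t) := (hT.top_apply top_mem_CL (hT.1 v hv.1 t ht.1)).symm
        _ ≤ Tbar₃ T x y z := le_Tbar₃ hu hv ht
  · exact absurd hs_bot hs_ne
  · obtain ⟨rfl, rfl⟩ : y = ⊤ ∧ z = ⊤ := inf_eq_top_iff.mp (top_le_iff.mp hs_yz)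
    have htop : (⊤ : L) ∈ kappa ⊤ := ⟨top_mem_CL, hs_ne, le_rfl⟩
    calc T u ⊤ = T u (T ⊤ ⊤) := by rw [hT.2.2.2.2 ⊤ top_mem_CL]
      _ ≤ Tbar₃ T x ⊤ ⊤ := le_Tbar₃ hu htop htop

lemma Tbar_Tbar_eq_Tbar₃ (x y z : L) : Tbar T x (Tbar T y z) = Tbar₃ T x y z := by
  refine le_antisymm (Tbar_le fun u hu s hs => apply_le_Tbar₃ hT hu hs) ?_
  refine iSup₂_le fun u hu => iSup₂_le fun v hv => iSup₂_le fun t ht => ?_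
  by_cases h : T v t = ⊥
  · rw [h, hT.apply_bot hu.1]
    exact bot_le
  · exact le_Tbar hu ⟨hT.1 v hv.1 t ht.1, h, le_Tbar hv ht⟩

lemma Tbar₃_rotate (x y z : L) : Tbar₃ T x y z = Tbar₃ T z x y := by
  have hrot : ∀ u ∈ kappa x, ∀ v ∈ kappa y, ∀ t ∈ kappa z, T u (T v t) = T t (T u v) :=
    fun u hu v hv t ht => by
      rw [hT.2.2.2.1 u hu.1 v hv.1 t ht.1, hT.2.2.1 _ (hT.1 u hu.1 v hv.1) t ht.1]
  refine le_antisymm ?_ ?_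
  · refine iSup₂_le fun u hu => iSup₂_le fun v hv => iSup₂_le fun t ht => ?_
    exact hrot u hu v hv t ht ▸ le_Tbar₃ ht hu hv
  · refine iSup₂_le fun t ht => iSup₂_le fun u hu => iSup₂_le fun v hv => ?_
    exact (hrot u hu v hv t ht).symm ▸ le_Tbar₃ hu hv ht

end Tbar

theorem stmt4_general {L : Type*} [CompleteLattice L] [IsAtomistic L]
    (T : L → L → L)
    (hT : IsTnormOn (CL L) T) :
    IsTnorm (Tbar T) := by
  refine ⟨fun x => Tbar_mono_right, Tbar_comm hT, fun x y z => ?_, Tbar_top hT⟩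
  rw [Tbar_Tbar_eq_Tbar₃ hT, Tbar_comm hT (Tbar T x y), Tbar_Tbar_eq_Tbar₃ hT, Tbar₃_rotate hT]

theorem stmt4 {L : Type*} [CompleteLattice L] [IsAtomistic L]
    (hlen : ∃ x : L, x ≠ ⊥ ∧ x ≠ ⊤) (T : L → L → L)
    (hT : IsTnormOn (CL L) T) :
    IsTnorm (Tbar T) :=
  stmt4_general T hT
end

section
/- There is no left-continuous t-norm on a non-Boolean atomistic complete lattice. -/
def LeftCts {L : Type*} [CompleteLattice L] (T : L → L → L) : Prop :=
  ∀ a : L, ∀ S : Set L, T a (sSup S) = ⨆ s ∈ S, T a s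

/-!
For an atom `a`, `T a x ≤ a ⊓ x` vanishes unless `a ≤ x`. Left-continuity applied to
`⊤ = ⋁ atoms` then forces `T a a = a`, and applied to `a ≤ ⋁ S` it gives
`a = T a a ≤ ⋁_{s ∈ S} T a s`, so `a ≤ s` for some `s ∈ S`. In an atomistic lattice whose atoms
are completely join-prime, `x ↦ {atoms below x}` is an order isomorphism onto the powerset of
the atoms, i.e. the lattice is Boolean.
-/

def IsAtomistic.orderIsoSetOfIsAtom {L : Type*} [CompleteLattice L] [IsAtomistic L]
    (hprime : ∀ a : L, IsAtom a → ∀ S : Set L, a ≤ sSup S → ∃ s ∈ S, a ≤ s) :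
    L ≃o Set {a : L // IsAtom a} where
  toFun x := {a | (a : L) ≤ x}
  invFun S := sSup (Subtype.val '' S)
  left_inv x := by simp [Subtype.coe_image]
  right_inv S := by
    ext ⟨a, ha⟩
    refine ⟨fun hle => ?_, fun hmem => le_sSup ⟨⟨a, ha⟩, hmem, rfl⟩⟩
    obtain ⟨_, ⟨⟨b, hb⟩, hbS, rfl⟩, hab⟩ := hprime a ha _ hle
    obtain rfl := (hb.le_iff_eq ha.1).mp hab
    exact hbS
  map_rel_iff' {x y} := by simpa using le_iff_atom_le_imp.symm

namespace IsTnorm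

variable {L : Type*} {T : L → L → L}

theorem le_inf [Lattice L] [BoundedOrder L] (hT : IsTnorm T) (x y : L) : T x y ≤ x ⊓ y := by
  obtain ⟨hmono, hcomm, -, htop⟩ := hT
  have hle_left : ∀ x y, T x y ≤ x := fun x y => (hmono x le_top).trans_eq (htop x)
  exact _root_.le_inf (hle_left x y) (hcomm x y ▸ hle_left y x)

theorem eq_bot_of_isAtom_of_not_le [Lattice L] [BoundedOrder L] (hT : IsTnorm T) {a x : L}
    (ha : IsAtom a) (hax : ¬ a ≤ x) : T a x = ⊥ :=
  le_bot_iff.mp <| (hT.le_inf a x).trans_eq (disjoint_iff.mp (ha.not_le_iff_disjoint.mp hax))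

variable [CompleteLattice L]

theorem apply_self_of_isAtom [IsAtomistic L] (hT : IsTnorm T) (hlc : LeftCts T) {a : L}
    (ha : IsAtom a) : T a a = a := by
  refine le_antisymm ((hT.le_inf a a).trans inf_le_left) ?_
  calc a = T a (sSup {c : L | IsAtom c}) := by rw [sSup_atoms_eq_top, hT.2.2.2]
    _ = ⨆ c ∈ {c : L | IsAtom c}, T a c := hlc a _
    _ ≤ T a a := iSup₂_le fun c hc => by
      rcases eq_or_ne a c with rfl | hne
      · exact le_rfl
      · rw [hT.eq_bot_of_isAtom_of_not_le ha fun hac => hne ((hc.le_iff_eq ha.1).mp hac)]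
        exact bot_le

theorem exists_mem_le_of_isAtom_le_sSup [IsAtomistic L] (hT : IsTnorm T) (hlc : LeftCts T)
    {a : L} (ha : IsAtom a) {S : Set L} (haS : a ≤ sSup S) : ∃ s ∈ S, a ≤ s := by
  by_contra! hS
  have hbot : T a (sSup S) = ⊥ := by
    rw [hlc a S]
    exact iSup₂_eq_bot.mpr fun s hs => hT.eq_bot_of_isAtom_of_not_le ha (hS s hs)
  refine ha.1 (le_bot_iff.mp ?_)
  calc a = T a a := (hT.apply_self_of_isAtom hlc ha).symm
    _ ≤ T a (sSup S) := hT.1 a haS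
    _ = ⊥ := hbot

end IsTnorm

theorem stmt13 {L : Type*} [CompleteLattice L] [IsAtomistic L]
    (hnb : IsEmpty (L ≃o Set {a : L // IsAtom a})) :
    ¬ ∃ T : L → L → L, IsTnorm T ∧ LeftCts T := by
  rintro ⟨T, hT, hlc⟩
  exact hnb.elim <| IsAtomistic.orderIsoSetOfIsAtom fun _ ha _ =>
    hT.exists_mem_le_of_isAtom_le_sSup hlc ha
end

section
/- Let L be an atomistic complete lattice (length ≥ 2). The map T ↦ T̄ is an order isomorphism from the poset of t-norms on C(L) (ordered pointwise) to the poset 𝕋(L) = {T̄ | T a t-norm on C(L)} of generated t-norms on L (ordered pointwise). Consequently 𝕋(L) is order-isomorphic to the powerset of A(L). -/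
abbrev CS (L : Type*) [CompleteLattice L] := {x : L // IsAtom x ∨ x = ⊥ ∨ x = ⊤}

def topCS {L : Type*} [CompleteLattice L] : CS L := ⟨⊤, Or.inr (Or.inr rfl)⟩

def IsTnormC {L : Type*} [CompleteLattice L] (T : CS L → CS L → CS L) : Prop :=
  (∀ x : CS L, Monotone (T x)) ∧ (∀ x y : CS L, T x y = T y x) ∧
  (∀ x y z : CS L, T x (T y z) = T (T x y) z) ∧ (∀ x : CS L, T x topCS = x)

noncomputable def TbarC {L : Type*} [CompleteLattice L]
    (T : CS L → CS L → CS L) (x y : L) : L :=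
  sSup {z : L | ∃ u v : CS L, (u : L) ≠ ⊥ ∧ (u : L) ≤ x ∧
    (v : L) ≠ ⊥ ∧ (v : L) ≤ y ∧ z = (T u v : L)}

def TT (L : Type*) [CompleteLattice L] : Set (L → L → L) :=
  {S | ∃ T : CS L → CS L → CS L, IsTnormC T ∧ S = TbarC T}

/-!
Every element of `C(L)` other than `1` is `0` or an atom, and a t-norm lies below both of its
arguments, so a t-norm `T` on `C(L)` is `0` on all pairs of elements different from `1` except
possibly on diagonal pairs `(a, a)` of atoms, where `T(a, a) ∈ {0, a}`. Hence `T` is determined,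
monotonically, by its set of idempotent atoms, and every set of atoms occurs. On the other
side, `T̄` agrees with `T` on the nonzero elements of `C(L)`, so `T ↦ T̄` reflects the pointwise
order as well as preserving it, and it is onto `𝕋(L)` by definition.
-/

section

variable {L : Type*} [CompleteLattice L]

def botCS : CS L := ⟨⊥, Or.inr (Or.inl rfl)⟩

def atomCS (a : {a : L // IsAtom a}) : CS L := ⟨a, Or.inl a.2⟩

lemma le_topCS (u : CS L) : u ≤ topCS := le_top (a := (u : L))

lemma botCS_le (u : CS L) : botCS ≤ u := bot_le (a := (u : L))

lemma botCS_ne_topCS [Nontrivial L] : (botCS : CS L) ≠ topCS :=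
  fun h => bot_ne_top (congrArg Subtype.val h)

lemma atomCS_ne_topCS (hat : ¬ IsAtom (⊤ : L)) (a : {a : L // IsAtom a}) :
    atomCS a ≠ topCS := by
  intro h
  apply hat
  rw [← show (a : L) = ⊤ from congrArg Subtype.val h]
  exact a.2

lemma CS.eq_botCS_or_eq_of_le {u w : CS L} (h : w ≤ u) (hu : u ≠ topCS) :
    w = botCS ∨ w = u := by
  rcases u.2 with hat | hbot | htop
  · exact (hat.le_iff.mp h).imp Subtype.ext Subtype.ext
  · have hw : (w : L) ≤ u := h
    rw [hbot] at hw
    exact Or.inl (Subtype.ext (le_bot_iff.mp hw))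
  · exact absurd (Subtype.ext htop) hu

namespace IsTnormC

variable {T : CS L → CS L → CS L} (hT : IsTnormC T)
include hT

lemma top_left (v : CS L) : T topCS v = v := (hT.2.1 _ _).trans (hT.2.2.2 v)

lemma le_left (u v : CS L) : T u v ≤ u :=
  (hT.1 u (le_topCS v)).trans_eq (hT.2.2.2 u)

lemma le_right (u v : CS L) : T u v ≤ v := hT.2.1 u v ▸ hT.le_left v u

lemma mono {u u' v v' : CS L} (hu : u ≤ u') (hv : v ≤ v') : T u v ≤ T u' v' :=
  (hT.1 u hv).trans (hT.2.1 u v' ▸ hT.2.1 u' v' ▸ hT.1 v' hu)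

lemma eq_botCS_or_idem {u v : CS L} (hu : u ≠ topCS) (hv : v ≠ topCS) :
    T u v = botCS ∨ (u = v ∧ T u u = u) := by
  rcases CS.eq_botCS_or_eq_of_le (hT.le_left u v) hu with h | hleft
  · exact Or.inl h
  rcases CS.eq_botCS_or_eq_of_le (hT.le_right u v) hv with h | hright
  · exact Or.inl h
  obtain rfl : u = v := hleft.symm.trans hright
  exact Or.inr ⟨rfl, hleft⟩

end IsTnormC

section Generated

variable {T T' : CS L → CS L → CS L}

lemma TbarC_coe (hT : IsTnormC T) {u v : CS L} (hu : (u : L) ≠ ⊥) (hv : (v : L) ≠ ⊥) :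
    TbarC T u v = T u v := by
  refine le_antisymm (sSup_le ?_) (le_sSup ⟨u, v, hu, le_rfl, hv, le_rfl, rfl⟩)
  rintro _ ⟨u', v', -, hu', -, hv', rfl⟩
  exact hT.mono hu' hv'

lemma TbarC_mono (h : T ≤ T') : TbarC T ≤ TbarC T' := by
  intro x y
  refine sSup_le ?_
  rintro _ ⟨u, v, hu, hux, hv, hvy, rfl⟩
  exact le_sSup_of_le ⟨u, v, hu, hux, hv, hvy, rfl⟩ (h u v)

lemma TbarC_le_TbarC_iff (hT : IsTnormC T) (hT' : IsTnormC T') :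
    TbarC T ≤ TbarC T' ↔ T ≤ T' := by
  refine ⟨fun h u v => ?_, TbarC_mono⟩
  show (T u v : L) ≤ T' u v
  by_cases hu : (u : L) = ⊥
  · exact (hT.le_left u v).trans (hu.trans_le bot_le)
  by_cases hv : (v : L) = ⊥
  · exact (hT.le_right u v).trans (hv.trans_le bot_le)
  rw [← TbarC_coe hT hu hv, ← TbarC_coe hT' hu hv]
  exact h u v

end Generated

noncomputable def generatedTnormIso :
    {T : CS L → CS L → CS L // IsTnormC T} ≃o {S : L → L → L // S ∈ TT L} :=
  OrderIso.ofSurjective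
    (OrderEmbedding.ofMapLEIff
      (fun T => (⟨TbarC T.1, T.1, T.2, rfl⟩ : {S : L → L → L // S ∈ TT L}))
      fun T T' => TbarC_le_TbarC_iff T.2 T'.2)
    (by rintro ⟨_, T, hT, rfl⟩; exact ⟨⟨T, hT⟩, rfl⟩)

def idempotentAtoms (T : CS L → CS L → CS L) : Set {a : L // IsAtom a} :=
  {a | T (atomCS a) (atomCS a) = atomCS a}

lemma IsTnormC.le_iff_idempotentAtoms_subset {T T' : CS L → CS L → CS L} (hT : IsTnormC T)
    (hT' : IsTnormC T') : T ≤ T' ↔ idempotentAtoms T ⊆ idempotentAtoms T' := by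
  refine ⟨fun h a ha => le_antisymm (hT'.le_left _ _) (ha.symm.le.trans (h _ _)),
    fun h u v => ?_⟩
  by_cases hu : u = topCS
  · rw [hu, hT.top_left, hT'.top_left]
  by_cases hv : v = topCS
  · rw [hv, hT.2.2.2, hT'.2.2.2]
  rcases hT.eq_botCS_or_idem hu hv with h0 | ⟨rfl, hidem⟩
  · exact h0 ▸ botCS_le _
  rcases u.2 with hatom | hbot | htop
  · have hidem' : T' u u = u := h (a := ⟨u, hatom⟩) hidem
    rw [hidem, hidem']
  · rw [hidem, show u = botCS from Subtype.ext hbot]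
    exact botCS_le _
  · exact absurd (Subtype.ext htop) hu

open Classical in
noncomputable def tnormOfAtoms (A : Set {a : L // IsAtom a}) (u v : CS L) : CS L :=
  if u = topCS then v
  else if v = topCS then u
  else if u = v ∧ (u : L) ∈ Subtype.val '' A then u
  else botCS

section tnormOfAtoms

variable (A : Set {a : L // IsAtom a})

lemma tnormOfAtoms_top_right (u : CS L) : tnormOfAtoms A u topCS = u := by
  unfold tnormOfAtoms; split_ifs <;> simp_all

open Classical in
lemma tnormOfAtoms_of_ne_top {u v : CS L} (hu : u ≠ topCS) (hv : v ≠ topCS) :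
    tnormOfAtoms A u v = if u = v ∧ (u : L) ∈ Subtype.val '' A then u else botCS := by
  simp only [tnormOfAtoms, if_neg hu, if_neg hv]

lemma tnormOfAtoms_comm (u v : CS L) : tnormOfAtoms A u v = tnormOfAtoms A v u := by
  unfold tnormOfAtoms; grind

-- Away from `⊤` both sides are `u` if `u = v = w` lies in `A` and `⊥` otherwise; `⊥ ≠ ⊤`
-- keeps the inner products away from `⊤`.
lemma tnormOfAtoms_assoc [Nontrivial L] (u v w : CS L) :
    tnormOfAtoms A u (tnormOfAtoms A v w) = tnormOfAtoms A (tnormOfAtoms A u v) w := by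
  have : (botCS : CS L) ≠ topCS := botCS_ne_topCS
  unfold tnormOfAtoms; grind

lemma tnormOfAtoms_le_left (u v : CS L) : tnormOfAtoms A u v ≤ u := by
  unfold tnormOfAtoms
  split_ifs with hu
  · exact hu ▸ le_topCS v
  all_goals first | exact le_rfl | exact botCS_le u

lemma tnormOfAtoms_botCS_right [Nontrivial L] (u : CS L) : tnormOfAtoms A u botCS = botCS :=
  le_antisymm ((tnormOfAtoms_comm A u botCS).trans_le (tnormOfAtoms_le_left A _ _)) (botCS_le _)

lemma tnormOfAtoms_mono [Nontrivial L] (u : CS L) : Monotone (tnormOfAtoms A u) := by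
  intro v v' h
  by_cases hv' : v' = topCS
  · rw [hv', tnormOfAtoms_top_right]
    exact tnormOfAtoms_le_left A u v
  rcases CS.eq_botCS_or_eq_of_le h hv' with rfl | rfl
  · rw [tnormOfAtoms_botCS_right]
    exact botCS_le _
  · exact le_rfl

lemma isTnormC_tnormOfAtoms [Nontrivial L] : IsTnormC (tnormOfAtoms A) :=
  ⟨tnormOfAtoms_mono A, tnormOfAtoms_comm A, tnormOfAtoms_assoc A, tnormOfAtoms_top_right A⟩

lemma idempotentAtoms_tnormOfAtoms (hat : ¬ IsAtom (⊤ : L)) :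
    idempotentAtoms (tnormOfAtoms A) = A := by
  ext a
  have ha := atomCS_ne_topCS hat a
  have hmem : (a : L) ∈ Subtype.val '' A ↔ a ∈ A := Subtype.val_injective.mem_set_image
  change tnormOfAtoms A (atomCS a) (atomCS a) = atomCS a ↔ a ∈ A
  rw [tnormOfAtoms_of_ne_top A ha ha]
  split_ifs with h
  · exact iff_of_true rfl (hmem.mp h.2)
  · exact iff_of_false (fun hbot => a.2.1 (congrArg Subtype.val hbot).symm)
      fun haA => h ⟨rfl, hmem.mpr haA⟩

end tnormOfAtoms

noncomputable def tnormIsoAtoms [Nontrivial L] (hat : ¬ IsAtom (⊤ : L)) :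
    {T : CS L → CS L → CS L // IsTnormC T} ≃o Set {a : L // IsAtom a} :=
  OrderIso.ofSurjective
    (OrderEmbedding.ofMapLEIff (fun T => idempotentAtoms T.1)
      fun T T' => (T.2.le_iff_idempotentAtoms_subset T'.2).symm)
    fun A => ⟨⟨tnormOfAtoms A, isTnormC_tnormOfAtoms A⟩, idempotentAtoms_tnormOfAtoms A hat⟩

end

theorem stmt16_general {L : Type*} [CompleteLattice L]
    (hlen : ∃ x : L, x ≠ ⊥ ∧ x ≠ ⊤) :
    ∃ e : {T : CS L → CS L → CS L // IsTnormC T} ≃o {S : L → L → L // S ∈ TT L},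
      (∀ T : {T : CS L → CS L → CS L // IsTnormC T}, (e T).1 = TbarC T.1) ∧
      Nonempty ({S : L → L → L // S ∈ TT L} ≃o Set {a : L // IsAtom a}) := by
  obtain ⟨x, hx_bot, hx_top⟩ := hlen
  have : Nontrivial L := ⟨x, ⊥, hx_bot⟩
  have hat : ¬ IsAtom (⊤ : L) := fun h => hx_top ((h.le_iff.mp le_top).resolve_left hx_bot)
  exact ⟨generatedTnormIso, fun _ => rfl,
    ⟨generatedTnormIso.symm.trans (tnormIsoAtoms hat)⟩⟩

theorem stmt16 {L : Type*} [CompleteLattice L] [IsAtomistic L]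
    (hlen : ∃ x : L, x ≠ ⊥ ∧ x ≠ ⊤) :
    ∃ e : {T : CS L → CS L → CS L // IsTnormC T} ≃o {S : L → L → L // S ∈ TT L},
      (∀ T : {T : CS L → CS L → CS L // IsTnormC T}, (e T).1 = TbarC T.1) ∧
      Nonempty ({S : L → L → L // S ∈ TT L} ≃o Set {a : L // IsAtom a}) :=
  stmt16_general hlen
end
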